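/- arXiv:1408.1657 — 5 statements merged into one kernel-verified Lean document; each statement's English description precedes it below -/
import Mathlib

section
/- The number of Motzkin-type prefixes of length n ending at height m, with s colors for matched up-down pairs (not counting colorings of the m unmatched up-steps), equals M_{n,m,s} = sum_{i≥0} ((m+1)/(n+1)) * (n+1)! / ((i+m+1)! * i! * (n-2i-m)!) * s^i. -/
/-!
Sort the prefixes by the number `k` of level steps. Deleting them leaves a ballot path of length
`n - k`, which must be `m + 2 * i` with `i` the number of (colored) matched pairs; other parities
contribute nothing. By the reflection principle the ballot paths of length `m + 2 * i` ending at
height `m` number `C(m + 2i, m + i) - C(m + 2i, m + i + 1) = (m + 1) (m + 2i)! / ((m + i + 1)! i!)`,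
and placing the level steps contributes the factor `C(n, m + 2i)`.
-/

/-- The partial sum of the first `k` steps of a walk `w`. -/
def psum {n : ℕ} (w : Fin n → ℤ) (k : ℕ) : ℤ :=
  ∑ j ∈ Finset.univ.filter (fun j : Fin n => (j : ℕ) < k), w j

/-- `B j m` is the number of `±1`-step paths of length `j` from height `0` to height `m`
that never go below the x-axis (the Ballot-problem count). -/
noncomputable def B (j m : ℕ) : ℕ :=
  Nat.card {w : Fin j → ℤ //
    (∀ t, w t = 1 ∨ w t = -1) ∧
    (∀ k, k ≤ j → 0 ≤ psum w k) ∧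
    psum w j = (m : ℤ)}

open Finset Nat

section BallotPaths

variable {j : ℕ}

theorem psum_snoc (v : Fin j → ℤ) (x : ℤ) (k : ℕ) :
    psum (Fin.snoc v x : Fin (j + 1) → ℤ) k = psum v k + if j < k then x else 0 := by
  simp only [psum, sum_filter, Fin.sum_univ_castSucc, Fin.snoc_castSucc, Fin.snoc_last,
    Fin.val_castSucc, Fin.val_last]

theorem psum_of_le {k : ℕ} (v : Fin j → ℤ) (hk : j ≤ k) : psum v k = psum v j := by
  unfold psum
  rw [filter_true_of_mem fun (t : Fin j) _ => t.isLt.trans_le hk,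
    filter_true_of_mem fun (t : Fin j) _ => t.isLt]

def IsBallotPath (h : ℤ) (w : Fin j → ℤ) : Prop :=
  (∀ t, w t = 1 ∨ w t = -1) ∧ (∀ k, k ≤ j → 0 ≤ psum w k) ∧ psum w j = h

theorem isBallotPath_snoc_iff {h x : ℤ} {v : Fin j → ℤ} :
    IsBallotPath h (Fin.snoc v x : Fin (j + 1) → ℤ) ↔
      (x = 1 ∨ x = -1) ∧ 0 ≤ h ∧ IsBallotPath (h - x) v := by
  have hlow : ∀ k ≤ j, psum (Fin.snoc v x : Fin (j + 1) → ℤ) k = psum v k := fun k hk => by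
    rw [psum_snoc, if_neg hk.not_gt, add_zero]
  have hend : psum (Fin.snoc v x : Fin (j + 1) → ℤ) (j + 1) = psum v j + x := by
    rw [psum_snoc, if_pos j.lt_succ_self, psum_of_le v j.le_succ]
  have hnn : (∀ k ≤ j + 1, 0 ≤ psum (Fin.snoc v x : Fin (j + 1) → ℤ) k) ↔
      (∀ k ≤ j, 0 ≤ psum v k) ∧ 0 ≤ psum v j + x := by
    simp +contextual only [Nat.le_succ_iff, or_imp, forall_and, forall_eq, hlow, hend]
  simp only [IsBallotPath, Fin.forall_fin_succ', Fin.snoc_castSucc, Fin.snoc_last, hnn, hend]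
  constructor
  · rintro ⟨⟨hv, hx⟩, ⟨hnn, hh⟩, rfl⟩
    exact ⟨hx, hh, hv, hnn, by ring⟩
  · rintro ⟨hx, hh, hv, hnn, hend⟩
    exact ⟨⟨hv, hx⟩, ⟨hnn, by linarith⟩, by linarith⟩

theorem IsBallotPath.init {h : ℤ} {w : Fin (j + 1) → ℤ} (hw : IsBallotPath h w) :
    IsBallotPath (h - w (Fin.last j)) (Fin.init w) := by
  rw [← Fin.snoc_init_self w, isBallotPath_snoc_iff] at hw
  simpa using hw.2.2

theorem IsBallotPath.last_eq {h : ℤ} {w : Fin (j + 1) → ℤ} (hw : IsBallotPath h w) :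
    w (Fin.last j) = 1 ∨ w (Fin.last j) = -1 :=
  hw.1 _

instance (h : ℤ) : Finite {w : Fin j → ℤ // IsBallotPath h w} :=
  Finite.of_injective (fun w t => decide (w.1 t = 1)) fun w w' hww' => by
    ext t
    have := congrFun hww' t
    rcases w.2.1 t with h1 | h1 <;> rcases w'.2.1 t with h2 | h2 <;> simp_all

def ballotPathSuccEquiv {h : ℤ} (hh : 0 ≤ h) :
    {w : Fin (j + 1) → ℤ // IsBallotPath h w} ≃
      {v : Fin j → ℤ // IsBallotPath (h - 1) v} ⊕
        {v : Fin j → ℤ // IsBallotPath (h + 1) v} where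
  toFun w :=
    if hx : w.1 (Fin.last j) = 1 then
      .inl ⟨Fin.init w.1, hx ▸ w.2.init⟩
    else
      .inr ⟨Fin.init w.1, by simpa [(w.2.last_eq).resolve_left hx] using w.2.init⟩
  invFun := Sum.elim
    (fun v => ⟨Fin.snoc v.1 1, isBallotPath_snoc_iff.2 ⟨.inl rfl, hh, v.2⟩⟩)
    (fun v =>
      ⟨Fin.snoc v.1 (-1), isBallotPath_snoc_iff.2 ⟨.inr rfl, hh, by simpa using v.2⟩⟩)
  left_inv w := by
    by_cases hx : w.1 (Fin.last j) = 1
    · simp only [dif_pos hx, Sum.elim_inl]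
      ext1; conv_rhs => rw [← Fin.snoc_init_self w.1, hx]
    · simp only [dif_neg hx, Sum.elim_inr]
      ext1; conv_rhs => rw [← Fin.snoc_init_self w.1, (w.2.last_eq).resolve_left hx]
  right_inv v := by
    rcases v with v | v <;> simp

noncomputable def ballotCount (j : ℕ) (h : ℤ) : ℕ :=
  Nat.card {w : Fin j → ℤ // IsBallotPath h w}

theorem B_eq_ballotCount (j m : ℕ) : B j m = ballotCount j m := rfl

theorem ballotCount_zero (h : ℤ) : ballotCount 0 h = if h = 0 then 1 else 0 := by
  have hpath : ∀ w : Fin 0 → ℤ, IsBallotPath h w ↔ h = 0 := by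
    simp [IsBallotPath, psum, eq_comm]
  split_ifs with h0
  · exact Nat.card_eq_one_iff_unique.2 ⟨⟨fun _ _ => Subtype.ext (Subsingleton.elim _ _)⟩,
      ⟨⟨Fin.elim0, (hpath _).2 h0⟩⟩⟩
  · have : IsEmpty {w : Fin 0 → ℤ // IsBallotPath h w} := ⟨fun w => h0 ((hpath w.1).1 w.2)⟩
    exact Nat.card_of_isEmpty

theorem ballotCount_of_neg {h : ℤ} (hh : h < 0) : ballotCount j h = 0 := by
  have : IsEmpty {w : Fin j → ℤ // IsBallotPath h w} :=
    ⟨fun w => hh.not_ge (w.2.2.2 ▸ w.2.2.1 j le_rfl)⟩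
  exact Nat.card_of_isEmpty

theorem ballotCount_succ {h : ℤ} (hh : 0 ≤ h) :
    ballotCount (j + 1) h = ballotCount j (h - 1) + ballotCount j (h + 1) := by
  rw [ballotCount, Nat.card_congr (ballotPathSuccEquiv hh), Nat.card_sum, ballotCount, ballotCount]

end BallotPaths

/-- The number of unconstrained `±1`-walks of length `j` from height `0` to height `m`. -/
def freePathCount (j m : ℕ) : ℕ :=
  if Even (j + m) then j.choose ((j + m) / 2) else 0

theorem freePathCount_succ_succ (j m : ℕ) :
    freePathCount (j + 1) (m + 1) = freePathCount j m + freePathCount j (m + 2) := by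
  simp only [freePathCount, show j + 1 + (m + 1) = j + m + 2 by ring,
    show j + (m + 2) = j + m + 2 by ring, Nat.even_add, even_two, iff_true,
    Nat.add_div_right _ two_pos]
  split_ifs
  · exact Nat.choose_succ_succ' j _
  · rfl

theorem freePathCount_succ_zero (j : ℕ) : freePathCount (j + 1) 0 = 2 * freePathCount j 1 := by
  rcases Nat.even_or_odd j with ⟨a, rfl⟩ | ⟨a, rfl⟩
  · simp [freePathCount, ← two_mul]
  · have hdiv : (2 * a + 1 + 1 + 0) / 2 = a + 1 := by omega
    have hdiv' : (2 * a + 1 + 1) / 2 = a + 1 := by omega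
    have heven : Even (2 * a + 1 + 1) := ⟨a + 1, by ring⟩
    simp only [freePathCount, add_zero, hdiv', heven, if_true, Nat.choose_succ_succ,
      Nat.choose_symm_half]
    ring

theorem freePathCount_zero (m : ℕ) : freePathCount 0 m = if m = 0 then 1 else 0 := by
  rcases m.even_or_odd with ⟨a, rfl⟩ | ⟨a, rfl⟩ <;> rcases a with _ | a <;>
    simp [freePathCount, ← two_mul]

/-- The reflection principle, proved through the last-step recurrence shared by both sides. -/
theorem ballotCount_eq_freePathCount_sub (j m : ℕ) :
    (ballotCount j m : ℤ) = freePathCount j m - freePathCount j (m + 2) := by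
  induction j generalizing m with
  | zero =>
    rw [ballotCount_zero, freePathCount_zero, freePathCount_zero]
    simp
  | succ j ih =>
    rcases m with _ | m
    · have h := ih 1
      rw [Nat.cast_zero, ballotCount_succ le_rfl, ballotCount_of_neg (by norm_num), zero_add,
        freePathCount_succ_zero, freePathCount_succ_succ]
      push_cast at h ⊢
      linarith
    · have h := ih m
      have h' := ih (m + 2)
      rw [ballotCount_succ (by positivity), freePathCount_succ_succ, freePathCount_succ_succ]
      have hdown : ((m + 1 : ℕ) : ℤ) - 1 = m := by push_cast; ring
      have hup : ((m + 1 : ℕ) : ℤ) + 1 = (m + 2 : ℕ) := by push_cast; ring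
      rw [hdown, hup]
      push_cast at h h' ⊢
      linarith

theorem B_eq_zero_of_not_even {j m : ℕ} (h : ¬Even (j + m)) : B j m = 0 := by
  have h' : ¬Even (j + (m + 2)) := by simpa [← add_assoc, Nat.even_add] using h
  have := ballotCount_eq_freePathCount_sub j m
  simp only [freePathCount, if_neg h, if_neg h', Nat.cast_zero, sub_zero] at this
  exact_mod_cast this

theorem B_add_two_mul_mul_factorial (m i : ℕ) :
    B (m + 2 * i) m * ((i + m + 1)! * i !) = (m + 1) * (m + 2 * i)! := by
  have hfree : freePathCount (m + 2 * i) m = (m + 2 * i).choose (m + i) := by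
    rw [freePathCount, if_pos ⟨m + i, by ring⟩]; congr 1; omega
  have hfree' : freePathCount (m + 2 * i) (m + 2) = (m + 2 * i).choose (m + i + 1) := by
    rw [freePathCount, if_pos ⟨m + i + 1, by ring⟩]; congr 1; omega
  have hfact : (m + 2 * i).choose (m + i) * (m + i)! * i ! = (m + 2 * i)! := by
    simpa [show m + 2 * i - (m + i) = i by omega]
      using Nat.choose_mul_factorial_mul_factorial (show m + i ≤ m + 2 * i by omega)
  have hsucc :
      (m + 2 * i).choose (m + i + 1) * (m + i + 1) = (m + 2 * i).choose (m + i) * i := by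
    rw [Nat.choose_succ_right_eq]; congr 1; omega
  have hB := ballotCount_eq_freePathCount_sub (m + 2 * i) m
  rw [hfree, hfree'] at hB
  zify at hfact hsucc ⊢
  rw [B_eq_ballotCount, hB, show i + m + 1 = m + i + 1 by ring, Nat.factorial_succ]
  push_cast
  linear_combination ((m : ℤ) + 1) * hfact - ((m + i)! * i ! : ℤ) * hsucc

theorem choose_mul_B_add_two_mul {n m i : ℕ} (h : m + 2 * i ≤ n) :
    n.choose (m + 2 * i) * B (m + 2 * i) m =
      (m + 1) * n ! / ((i + m + 1)! * i ! * (n - 2 * i - m)!) := by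
  symm
  apply Nat.div_eq_of_eq_mul_left (by positivity)
  have hn := Nat.choose_mul_factorial_mul_factorial h
  rw [show n - 2 * i - m = n - (m + 2 * i) by omega]
  calc (m + 1) * n !
      = n.choose (m + 2 * i) * ((m + 1) * (m + 2 * i)!) * (n - (m + 2 * i))! := by
        rw [← hn]; ring
    _ = n.choose (m + 2 * i) * (B (m + 2 * i) m * ((i + m + 1)! * i !)) * (n - (m + 2 * i))! := by
        rw [B_add_two_mul_mul_factorial]
    _ = _ := by ring

theorem sum_range_succ_eq_sum_range_div_two {M : Type*} [AddCommMonoid M] (N : ℕ) (f : ℕ → M)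
    (hf : ∀ k ≤ N, ¬Even (N - k) → f k = 0) :
    ∑ k ∈ range (N + 1), f k = ∑ i ∈ range (N / 2 + 1), f (N - 2 * i) := by
  rw [← sum_image (g := fun i => N - 2 * i) fun a ha b hb hab => by
    simp only [coe_range, Set.mem_Iio] at ha hb hab; omega]
  refine (sum_subset (fun k hk => ?_) fun k hk hk' => hf k ?_ fun ⟨r, hr⟩ => hk' ?_).symm
  · simp only [mem_image, mem_range] at hk ⊢; omega
  · simp only [mem_range] at hk; omega
  · simp only [mem_image, mem_range] at hk ⊢
    exact ⟨r, by omega, by omega⟩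

/-- The number of Motzkin-type prefixes of length `n` ending at height `m`, with `s`
colors for matched up-down pairs (and unmatched up-steps uncolored), namely
`M_{n,m,s} = ∑ₖ (n choose k) * s^((n-k-m)/2) * B_{n-k,m}`, equals the multinomial formula
`∑ᵢ (m+1) * n! / ((i+m+1)! * i! * (n-2i-m)!) * s^i`
(where `(m+1)/(n+1) * (n+1)! = (m+1) * n!`). -/
theorem colored_motzkin_prefix_count (n m s : ℕ) (hm : m ≤ n) :
    ∑ k ∈ Finset.range (n - m + 1), n.choose k * s ^ ((n - k - m) / 2) * B (n - k) m =
    ∑ i ∈ Finset.range ((n - m) / 2 + 1),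
      (m + 1) * n.factorial /
        ((i + m + 1).factorial * i.factorial * (n - 2 * i - m).factorial) * s ^ i := by
  have hodd : ∀ k ≤ n - m, ¬Even (n - m - k) →
      n.choose k * s ^ ((n - k - m) / 2) * B (n - k) m = 0 := fun k hk hodd => by
    have hpar : n - k + m = n - m - k + 2 * m := by omega
    rw [B_eq_zero_of_not_even (by simpa [hpar, Nat.even_add] using hodd), mul_zero]
  rw [sum_range_succ_eq_sum_range_div_two (n - m) _ hodd]
  refine sum_congr rfl fun i hmem => ?_
  have hi : m + 2 * i ≤ n := by simp only [mem_range] at hmem; omega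
  rw [show n - (n - m - 2 * i) = m + 2 * i by omega, show (m + 2 * i - m) / 2 = i by omega,
    show n - m - 2 * i = n - (m + 2 * i) by omega, Nat.choose_symm hi,
    ← choose_mul_B_add_two_mul hi]
  ring
end

section
/- The Motzkin numbers satisfy 1/3 ≤ M_k / M_{k+1} ≤ 1 for all k ≥ 0. -/
/-- `motzkinNum k` is the `k`-th Motzkin number: the number of paths from `(0,0)` to
`(k,0)` with steps `1, 0, -1` that never go below the x-axis. -/
noncomputable def motzkinNum (k : ℕ) : ℕ :=
  Nat.card {w : Fin k → ℤ //
    (∀ j, w j = 1 ∨ w j = 0 ∨ w j = -1) ∧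
    (∀ t, t ≤ k → 0 ≤ psum w t) ∧
    psum w k = 0}

open Finset

lemma psum_of_isEmpty (w : Fin 0 → ℤ) (t : ℕ) : psum w t = 0 := by
  simp [psum]

lemma psum_snoc_of_le {k : ℕ} (w : Fin k → ℤ) (s : ℤ) {t : ℕ} (ht : t ≤ k) :
    psum (Fin.snoc w s : Fin (k + 1) → ℤ) t = psum w t := by
  simp only [psum, sum_filter, Fin.sum_univ_castSucc, Fin.snoc_castSucc, Fin.val_castSucc,
    Fin.val_last, Nat.not_lt.2 ht, if_false, add_zero]

lemma psum_snoc_succ {k : ℕ} (w : Fin k → ℤ) (s : ℤ) :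
    psum (Fin.snoc w s : Fin (k + 1) → ℤ) (k + 1) = psum w k + s := by
  simp [psum, sum_filter, Fin.sum_univ_castSucc, Fin.snoc_castSucc]

namespace Motzkin

def steps : Finset ℤ := {1, 0, -1}

def paths (k : ℕ) (h : ℤ) : Finset (Fin k → ℤ) :=
  {w ∈ Fintype.piFinset fun _ => steps | (∀ t ≤ k, 0 ≤ psum w t) ∧ psum w k = h}

lemma motzkinNum_eq_card_paths (k : ℕ) : motzkinNum k = #(paths k 0) := by
  rw [← Nat.card_eq_finsetCard]
  exact Nat.card_congr <| Equiv.subtypeEquivRight fun w => by simp [paths, steps]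

lemma paths_eq_empty_of_neg {k : ℕ} {h : ℤ} (hh : h < 0) : paths k h = ∅ := by
  ext w
  simp only [paths, mem_filter, notMem_empty, iff_false]
  rintro ⟨-, hnonneg, rfl⟩
  exact (hnonneg k le_rfl).not_gt hh

lemma paths_zero_eq_empty {h : ℤ} (hh : h ≠ 0) : paths 0 h = ∅ := by
  ext w
  simp [paths, psum_of_isEmpty, hh.symm]

lemma snoc_mem_paths_succ_iff {k : ℕ} {h : ℤ} (hh : 0 ≤ h) (w : Fin k → ℤ) (s : ℤ) :
    (Fin.snoc w s : Fin (k + 1) → ℤ) ∈ paths (k + 1) h ↔ s ∈ steps ∧ w ∈ paths k (h - s) := by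
  simp only [paths, mem_filter, Fintype.mem_piFinset, Fin.forall_fin_succ', Fin.snoc_castSucc,
    Fin.snoc_last, psum_snoc_succ]
  constructor
  · rintro ⟨⟨hw, hs⟩, hnonneg, hend⟩
    refine ⟨hs, hw, fun t ht => ?_, by omega⟩
    rw [← psum_snoc_of_le w s ht]
    exact hnonneg t (by omega)
  · rintro ⟨hs, hw, hnonneg, hend⟩
    refine ⟨⟨hw, hs⟩, fun t ht => ?_, by omega⟩
    rcases Nat.lt_or_ge t (k + 1) with ht' | ht'
    · rw [psum_snoc_of_le w s (by omega)]
      exact hnonneg t (by omega)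
    · rw [show t = k + 1 by omega, psum_snoc_succ]
      omega

lemma card_paths_succ (k : ℕ) {h : ℤ} (hh : 0 ≤ h) :
    #(paths (k + 1) h) = #(paths k (h - 1)) + #(paths k h) + #(paths k (h + 1)) := by
  have hsplit : #(paths (k + 1) h) = #(steps.sigma fun s => paths k (h - s)) := by
    refine card_nbij' (fun w => ⟨w (Fin.last k), Fin.init w⟩) (fun p => Fin.snoc p.2 p.1)
      ?_ ?_ ?_ ?_
    · intro w (hw : w ∈ paths (k + 1) h)
      rw [← Fin.snoc_init_self w, snoc_mem_paths_succ_iff hh] at hw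
      simpa using hw
    · rintro ⟨s, w⟩ (hw : _ ∈ steps.sigma _)
      simpa [snoc_mem_paths_succ_iff hh] using hw
    · intro w _
      exact Fin.snoc_init_self w
    · rintro ⟨s, w⟩ _
      simp
  rw [hsplit, card_sigma]
  simp [steps, sub_eq_add_neg]
  ring

/-- Stated from `h = -1`, where it is trivial, so that the inductive step at `h = 0` needs no
separate treatment. -/
lemma mul_card_paths_succ_le (m : ℕ) {h : ℤ} (hh : -1 ≤ h) :
    (h + 1) * #(paths m (h + 1)) ≤ (h + 2) * #(paths m h) := by
  induction m generalizing h with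
  | zero =>
    rcases hh.eq_or_lt with rfl | hh
    · simp
    · simp only [paths_zero_eq_empty (show h + 1 ≠ 0 by omega), card_empty, Nat.cast_zero,
        mul_zero]
      exact mul_nonneg (by omega) (Nat.cast_nonneg _)
  | succ m ih =>
    rcases hh.eq_or_lt with rfl | hh
    · simp
    have h₀ : 0 ≤ h := by omega
    rw [card_paths_succ m h₀, card_paths_succ m (by omega : 0 ≤ h + 1)]
    have ih₁ := ih (show -1 ≤ h - 1 by omega)
    have ih₂ := ih (show -1 ≤ h by omega)
    have ih₃ := ih (show -1 ≤ h + 1 by omega)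
    simp only [sub_add_cancel, add_sub_cancel_right, Nat.cast_add] at ih₁ ⊢
    refine le_of_mul_le_mul_left ?_ (by positivity : (0 : ℤ) < (h + 1) * (h + 2))
    -- multiplied by `(h+1)(h+2)`, the goal is exactly this combination of the three instances
    linear_combination (h + 2) ^ 2 * ih₁ + (h ^ 2 + 3 * h + 1) * ih₂ + (h + 1) ^ 2 * ih₃

lemma motzkinNum_pos (k : ℕ) : 0 < motzkinNum k := by
  rw [motzkinNum_eq_card_paths, card_pos]
  exact ⟨0, by simp [paths, steps, psum]⟩

lemma motzkinNum_le_succ (k : ℕ) : motzkinNum k ≤ motzkinNum (k + 1) := by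
  rw [motzkinNum_eq_card_paths, motzkinNum_eq_card_paths, card_paths_succ k le_rfl]
  omega

lemma motzkinNum_succ_le (k : ℕ) : motzkinNum (k + 1) ≤ 3 * motzkinNum k := by
  have hballot : #(paths k 1) ≤ 2 * #(paths k 0) := by
    have := mul_card_paths_succ_le k (h := 0) (by norm_num)
    norm_num at this
    exact_mod_cast this
  rw [motzkinNum_eq_card_paths, motzkinNum_eq_card_paths, card_paths_succ k le_rfl,
    paths_eq_empty_of_neg (by norm_num), card_empty, zero_add, zero_add]
  omega

end Motzkin

/-- The Motzkin numbers satisfy `1/3 ≤ M_k / M_{k+1} ≤ 1` for all `k ≥ 0`. -/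
theorem motzkin_ratio_bounds (k : ℕ) :
    (1 : ℚ) / 3 ≤ (motzkinNum k : ℚ) / (motzkinNum (k + 1) : ℚ) ∧
      (motzkinNum k : ℚ) / (motzkinNum (k + 1) : ℚ) ≤ 1 := by
  have hpos : (0 : ℚ) < motzkinNum (k + 1) := by exact_mod_cast Motzkin.motzkinNum_pos (k + 1)
  have hle : (motzkinNum k : ℚ) ≤ motzkinNum (k + 1) := by
    exact_mod_cast Motzkin.motzkinNum_le_succ k
  have hge : (motzkinNum (k + 1) : ℚ) ≤ 3 * motzkinNum k := by
    exact_mod_cast Motzkin.motzkinNum_succ_le k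
  constructor
  · rw [div_le_div_iff₀ (by norm_num) hpos]
    linarith
  · rwa [div_le_one hpos]
end

section
/- The differential entropy of the probability density p(α) = (1/T)·α²·exp(-α²/(2σ)) on [0,∞), where T = ∫_0^∞ α² exp(-α²/(2σ)) dα, equals γ - 1/2 + (1/2)(log 2 + log π + log σ), where γ is the Euler–Mascheroni constant. -/
/-!
With `b = 1/(2σ)` and `f(x) = x² e^{-b x²}`, the entropy of `f / T` is `log T - (1/T) ∫ f log f`,
and `f log f = 2 x² log x e^{-b x²} - b x⁴ e^{-b x²}`. The substitution `t = b x²` turns the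
two moments into `Γ(3/2)` and `Γ(5/2)`, and the logarithmic moment into
`Γ'(3/2) - log b · Γ(3/2)`, since `Γ'(s) = ∫₀^∞ t^{s-1} log t e^{-t} dt`. The Euler–Mascheroni
constant enters through `Γ'(3/2) = Γ(1/2) + Γ'(1/2)/2 = (√π/2)(2 - γ - 2 log 2)`.
-/

open MeasureTheory Real Set

theorem neg_integral_div_mul_log_div {α : Type*} [MeasurableSpace α] {μ : Measure α}
    {f : α → ℝ} {T : ℝ} (hfT : ∫ x, f x ∂μ = T) (hT : T ≠ 0)
    (hflog : Integrable (fun x => f x * log (f x)) μ) :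
    -∫ x, f x / T * log (f x / T) ∂μ = log T - (∫ x, f x * log (f x) ∂μ) / T := by
  have hf : Integrable f μ := Integrable.of_integral_ne_zero (hfT ▸ hT)
  have hpt : ∀ x, f x / T * log (f x / T) = f x * log (f x) / T - log T / T * f x := by
    intro x
    rcases eq_or_ne (f x) 0 with h | h
    · simp [h] -- both sides vanish, as `log 0 = 0`
    · rw [log_div h hT]; ring
  simp_rw [hpt]
  rw [integral_sub (hflog.div_const T) (hf.const_mul _), integral_div, integral_const_mul, hfT]
  field_simp
  ring

theorem abs_log_le_rpow_add_rpow_neg {x ε : ℝ} (hx : 0 < x) (hε : 0 < ε) :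
    |log x| ≤ (x ^ ε + x ^ (-ε)) / ε := by
  have hpos := log_le_rpow_div hx.le hε
  have hneg := log_le_rpow_div (inv_pos.mpr hx).le hε
  rw [log_inv, inv_rpow hx.le, ← rpow_neg hx.le] at hneg
  have h1 : 0 ≤ x ^ ε / ε := by positivity
  have h2 : 0 ≤ x ^ (-ε) / ε := by positivity
  rw [add_div, abs_le]
  constructor <;> linarith

theorem integrableOn_rpow_mul_log_mul {g : ℝ → ℝ} {q ε : ℝ} (hε : 0 < ε) (hg : Measurable g)
    (hplus : IntegrableOn (fun x => x ^ (q + ε) * g x) (Ioi 0))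
    (hminus : IntegrableOn (fun x => x ^ (q - ε) * g x) (Ioi 0)) :
    IntegrableOn (fun x => x ^ q * (log x * g x)) (Ioi 0) := by
  refine ((hplus.add hminus).norm.div_const ε).mono' (by fun_prop) ?_
  filter_upwards [ae_restrict_mem measurableSet_Ioi] with x (hx : 0 < x)
  have hsplit : x ^ q * (x ^ ε + x ^ (-ε)) = x ^ (q + ε) + x ^ (q - ε) := by
    rw [mul_add, ← rpow_add hx, ← rpow_add hx, sub_eq_add_neg]
  calc ‖x ^ q * (log x * g x)‖ = x ^ q * |log x| * |g x| := by
        rw [norm_mul, norm_mul, norm_of_nonneg (by positivity), norm_eq_abs, norm_eq_abs, mul_assoc]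
    _ ≤ x ^ q * ((x ^ ε + x ^ (-ε)) / ε) * |g x| := by
        gcongr; exact abs_log_le_rpow_add_rpow_neg hx hε
    _ = ‖x ^ (q + ε) * g x + x ^ (q - ε) * g x‖ / ε := by
        rw [← add_mul, ← hsplit, norm_mul, norm_of_nonneg (by positivity), norm_eq_abs]
        ring

namespace Real

theorem integrableOn_rpow_mul_log_mul_exp_neg {s : ℝ} (hs : 0 < s) :
    IntegrableOn (fun t => t ^ (s - 1) * (log t * exp (-t))) (Ioi 0) := by
  have hGamma : ∀ {r : ℝ}, 0 < r → IntegrableOn (fun t => t ^ (r - 1) * exp (-t)) (Ioi 0) :=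
    fun hr => (GammaIntegral_convergent hr).congr_fun (fun t _ => mul_comm _ _) measurableSet_Ioi
  refine integrableOn_rpow_mul_log_mul (half_pos hs) (by fun_prop) ?_ ?_
  · simpa [show s - 1 + s / 2 = 3 * s / 2 - 1 by ring] using hGamma (by positivity : 0 < 3 * s / 2)
  · simpa [show s - 1 - s / 2 = s / 2 - 1 by ring] using hGamma (half_pos hs)

theorem integral_rpow_mul_log_mul_exp_neg {s : ℝ} (hs : 0 < s) :
    ∫ t in Ioi 0, t ^ (s - 1) * (log t * exp (-t)) = deriv Gamma s := by
  set J := ∫ t in Ioi 0, t ^ (s - 1) * (log t * exp (-t)) with hJdef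
  have hs' : 0 < (s : ℂ).re := by simpa using hs
  have hJ : (∫ t : ℝ in Ioi 0, (t : ℂ) ^ ((s : ℂ) - 1) * ((log t : ℂ) * (exp (-t) : ℂ))) =
      (J : ℂ) := by
    rw [hJdef, ← integral_complex_ofReal]
    refine setIntegral_congr_fun measurableSet_Ioi fun t (ht : 0 < t) => ?_
    push_cast
    rw [← Complex.ofReal_one, ← Complex.ofReal_sub, Complex.ofReal_cpow ht.le]
  have hComplex : HasDerivAt Complex.Gamma (J : ℂ) s := by
    rw [← hJ]
    refine (Complex.hasDerivAt_GammaIntegral hs').congr_of_eventuallyEq ?_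
    filter_upwards [(isOpen_lt continuous_const Complex.continuous_re).mem_nhds hs'] with z hz
    exact Complex.Gamma_eq_integral hz
  have hReal : HasDerivAt Gamma J s := by
    simpa only [Complex.Gamma_ofReal, Complex.ofReal_re] using hComplex.real_of_complex
  exact hReal.deriv.symm

theorem hasDerivAt_Gamma_add_one {s d : ℝ} (hs : s ≠ 0) (h : HasDerivAt Gamma d s) :
    HasDerivAt Gamma (Gamma s + s * d) (s + 1) := by
  have hshift : HasDerivAt (fun x => Gamma (x + 1)) (1 * Gamma s + s * d) s := by
    refine ((hasDerivAt_id s).mul h).congr_of_eventuallyEq ?_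
    filter_upwards [eventually_ne_nhds hs] with x hx
    exact Gamma_add_one hx
  have h := HasDerivAt.comp_sub_const (s + 1) 1 (by rwa [add_sub_cancel_right] : HasDerivAt _ _ _)
  simp only [sub_add_cancel, one_mul] at h
  exact h

theorem Gamma_three_halves : Gamma (3 / 2) = √π / 2 := by
  rw [show (3 / 2 : ℝ) = 1 / 2 + 1 by norm_num, Gamma_add_one (by norm_num), Gamma_one_half_eq]
  ring

theorem deriv_Gamma_three_halves :
    deriv Gamma (3 / 2) = √π / 2 * (2 - eulerMascheroniConstant - 2 * log 2) := by
  have h := hasDerivAt_Gamma_add_one (by norm_num) hasDerivAt_Gamma_one_half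
  rw [show (1 / 2 : ℝ) + 1 = 3 / 2 by norm_num, Gamma_one_half_eq] at h
  rw [h.deriv]
  ring

end Real

theorem integral_rpow_mul_log_mul_exp_neg_mul {s b : ℝ} (hs : 0 < s) (hb : 0 < b) :
    ∫ t in Ioi 0, t ^ (s - 1) * (log t * exp (-b * t)) =
      b ^ (-s) * (deriv Gamma s - log b * Gamma s) := by
  set c := (b⁻¹) ^ (s - 1) with hc_def
  have hrescale : ∀ u, 0 < u → (b⁻¹ * u) ^ (s - 1) * (log (b⁻¹ * u) * exp (-u)) =
      c * (u ^ (s - 1) * (log u * exp (-u))) - c * log b * (exp (-u) * u ^ (s - 1)) := by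
    intro u hu
    rw [mul_rpow (by positivity) hu.le, log_mul (by positivity) hu.ne', log_inv]
    ring
  have hc : b⁻¹ * c = b ^ (-s) := by
    rw [hc_def, inv_rpow hb.le, rpow_sub_one hb.ne', rpow_neg hb.le]
    field_simp
  calc ∫ t in Ioi 0, t ^ (s - 1) * (log t * exp (-b * t))
      = ∫ t in Ioi 0, (fun u => (b⁻¹ * u) ^ (s - 1) * (log (b⁻¹ * u) * exp (-u))) (b * t) := by
        simp only [inv_mul_cancel_left₀ hb.ne', neg_mul]
    _ = b⁻¹ * ∫ u in Ioi 0, (b⁻¹ * u) ^ (s - 1) * (log (b⁻¹ * u) * exp (-u)) := by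
        rw [integral_comp_mul_left_Ioi
          (fun u => (b⁻¹ * u) ^ (s - 1) * (log (b⁻¹ * u) * exp (-u))) 0 hb, mul_zero, smul_eq_mul]
    _ = b⁻¹ * ∫ u in Ioi 0,
          c * (u ^ (s - 1) * (log u * exp (-u))) - c * log b * (exp (-u) * u ^ (s - 1)) := by
        rw [setIntegral_congr_fun measurableSet_Ioi hrescale]
    _ = b ^ (-s) * (deriv Gamma s - log b * Gamma s) := by
        rw [integral_sub ((integrableOn_rpow_mul_log_mul_exp_neg hs).const_mul c)
          ((GammaIntegral_convergent hs).const_mul _), integral_const_mul, integral_const_mul,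
          integral_rpow_mul_log_mul_exp_neg hs, ← Gamma_eq_integral hs, ← hc]
        ring

theorem integral_rpow_mul_exp_neg_mul_sq {q b : ℝ} (hq : -1 < q) (hb : 0 < b) :
    ∫ x in Ioi 0, x ^ q * exp (-b * x ^ 2) = b ^ (-(q + 1) / 2) * (1 / 2) * Gamma ((q + 1) / 2) := by
  simpa only [rpow_two] using integral_rpow_mul_exp_neg_mul_rpow two_pos hq hb

theorem integrableOn_rpow_mul_log_mul_exp_neg_mul_sq {q b : ℝ} (hq : -1 < q) (hb : 0 < b) :
    IntegrableOn (fun x => x ^ q * (log x * exp (-b * x ^ 2))) (Ioi 0) :=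
  integrableOn_rpow_mul_log_mul (half_pos (neg_lt_iff_pos_add.mp hq)) (by fun_prop)
    (integrableOn_rpow_mul_exp_neg_mul_sq hb (by linarith))
    (integrableOn_rpow_mul_exp_neg_mul_sq hb (by linarith))

theorem integral_rpow_mul_log_mul_exp_neg_mul_sq {q b : ℝ} (hq : -1 < q) (hb : 0 < b) :
    ∫ x in Ioi 0, x ^ q * (log x * exp (-b * x ^ 2)) =
      b ^ (-(q + 1) / 2) * (1 / 4) * (deriv Gamma ((q + 1) / 2) - log b * Gamma ((q + 1) / 2)) := by
  set s := (q + 1) / 2 with hs_def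
  have hs : 0 < s := by rw [hs_def]; linarith
  have hsubst : ∀ x, 0 < x → x ^ q * (log x * exp (-b * x ^ 2)) =
      (2 * x ^ ((2 : ℝ) - 1)) • ((1 / 4 : ℝ) * ((x ^ (2 : ℝ)) ^ (s - 1) *
        (log (x ^ (2 : ℝ)) * exp (-b * x ^ (2 : ℝ))))) := by
    intro x hx
    rw [← rpow_mul hx.le, log_rpow hx, rpow_two, smul_eq_mul, show (2 : ℝ) - 1 = 1 by norm_num,
      rpow_one, show q = 1 + 2 * (s - 1) by rw [hs_def]; ring, rpow_add hx, rpow_one]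
    ring
  rw [setIntegral_congr_fun measurableSet_Ioi hsubst, integral_comp_rpow_Ioi_of_pos two_pos
    (g := fun y => (1 / 4 : ℝ) * (y ^ (s - 1) * (log y * exp (-b * y)))), integral_const_mul,
    integral_rpow_mul_log_mul_exp_neg_mul hs hb, show -(q + 1) / 2 = -s by rw [hs_def]; ring]
  ring

theorem sq_mul_exp_neg_mul_sq_mul_log {b x : ℝ} (hx : 0 < x) :
    x ^ 2 * exp (-b * x ^ 2) * log (x ^ 2 * exp (-b * x ^ 2)) =
      2 * (x ^ (2 : ℝ) * (log x * exp (-b * x ^ 2))) - b * (x ^ (4 : ℝ) * exp (-b * x ^ 2)) := by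
  rw [log_mul (by positivity) (exp_pos _).ne', log_exp, show (4 : ℝ) = 2 + 2 by norm_num,
    rpow_add hx, rpow_two, log_pow]
  push_cast
  ring

theorem integrableOn_sq_mul_exp_neg_mul_sq_mul_log {b : ℝ} (hb : 0 < b) :
    IntegrableOn (fun x => x ^ 2 * exp (-b * x ^ 2) * log (x ^ 2 * exp (-b * x ^ 2))) (Ioi 0) := by
  refine IntegrableOn.congr_fun ?_ (fun x hx => (sq_mul_exp_neg_mul_sq_mul_log hx).symm)
    measurableSet_Ioi
  exact ((integrableOn_rpow_mul_log_mul_exp_neg_mul_sq (by norm_num) hb).const_mul 2).sub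
    ((integrableOn_rpow_mul_exp_neg_mul_sq hb (by norm_num)).const_mul b)

theorem integral_sq_mul_exp_neg_mul_sq {b : ℝ} (hb : 0 < b) :
    ∫ x in Ioi 0, x ^ 2 * exp (-b * x ^ 2) = √π / 4 * b ^ (-(3 / 2) : ℝ) := by
  have h := integral_rpow_mul_exp_neg_mul_sq (q := 2) (by norm_num) hb
  simp only [rpow_two] at h
  rw [h]
  norm_num [Gamma_three_halves]
  ring

theorem integral_sq_mul_exp_neg_mul_sq_mul_log {b : ℝ} (hb : 0 < b) :
    ∫ x in Ioi 0, x ^ 2 * exp (-b * x ^ 2) * log (x ^ 2 * exp (-b * x ^ 2)) =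
      √π / 4 * b ^ (-(3 / 2) : ℝ) * (1 / 2 - eulerMascheroniConstant - 2 * log 2 - log b) := by
  have hGamma_five_halves : Gamma (5 / 2) = 3 / 2 * (√π / 2) := by
    rw [show (5 / 2 : ℝ) = 3 / 2 + 1 by norm_num, Gamma_add_one (by norm_num), Gamma_three_halves]
  have hpow : b * b ^ (-(5 / 2) : ℝ) = b ^ (-(3 / 2) : ℝ) := by
    rw [← rpow_one_add' hb.le (by norm_num)]
    norm_num
  rw [setIntegral_congr_fun measurableSet_Ioi fun x hx => sq_mul_exp_neg_mul_sq_mul_log hx,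
    integral_sub ((integrableOn_rpow_mul_log_mul_exp_neg_mul_sq (by norm_num) hb).const_mul 2)
      ((integrableOn_rpow_mul_exp_neg_mul_sq hb (by norm_num)).const_mul b),
    integral_const_mul, integral_const_mul,
    integral_rpow_mul_log_mul_exp_neg_mul_sq (by norm_num) hb,
    integral_rpow_mul_exp_neg_mul_sq (by norm_num) hb]
  norm_num only [deriv_Gamma_three_halves, Gamma_three_halves, hGamma_five_halves, ← mul_assoc,
    hpow]
  ring

theorem neg_integral_normalized_sq_mul_exp_neg_mul_sq_mul_log {b T : ℝ} (hb : 0 < b)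
    (hT : ∫ x in Ioi 0, x ^ 2 * exp (-b * x ^ 2) = T) :
    -∫ x in Ioi 0, x ^ 2 * exp (-b * x ^ 2) / T * log (x ^ 2 * exp (-b * x ^ 2) / T) =
      eulerMascheroniConstant - 1 / 2 + 1 / 2 * log π - 1 / 2 * log b := by
  rw [integral_sq_mul_exp_neg_mul_sq hb] at hT
  subst hT
  rw [neg_integral_div_mul_log_div (integral_sq_mul_exp_neg_mul_sq hb) (by positivity)
      (integrableOn_sq_mul_exp_neg_mul_sq_mul_log hb),
    integral_sq_mul_exp_neg_mul_sq_mul_log hb, mul_div_cancel_left₀ _ (by positivity),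
    log_mul (by positivity) (by positivity), log_rpow hb, log_div (by positivity) (by norm_num),
    log_sqrt pi_pos.le, show (4 : ℝ) = 2 ^ 2 by norm_num, log_pow]
  push_cast
  ring

/-- The differential entropy `-∫_0^∞ p(α) log p(α) dα` of the probability density
`p(α) = (1/T)·α²·exp(-α²/(2σ))` on `[0,∞)`, where
`T = ∫_0^∞ α² exp(-α²/(2σ)) dα`, equals
`γ - 1/2 + (1/2)(log 2 + log π + log σ)`, with `γ` the Euler–Mascheroni constant. -/
theorem differential_entropy_alpha_sq_gaussian (σ : ℝ) (hσ : 0 < σ)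
    (T : ℝ) (hT : T = ∫ α in Set.Ioi (0 : ℝ), α ^ 2 * Real.exp (-α ^ 2 / (2 * σ))) :
    -(∫ α in Set.Ioi (0 : ℝ),
        (α ^ 2 * Real.exp (-α ^ 2 / (2 * σ)) / T) *
          Real.log (α ^ 2 * Real.exp (-α ^ 2 / (2 * σ)) / T)) =
      Real.eulerMascheroniConstant - 1 / 2 +
        (1 / 2) * (Real.log 2 + Real.log Real.pi + Real.log σ) := by
  have hexponent : ∀ α : ℝ, -α ^ 2 / (2 * σ) = -(2 * σ)⁻¹ * α ^ 2 := fun α => by ring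
  simp_rw [hexponent] at hT ⊢
  rw [neg_integral_normalized_sq_mul_exp_neg_mul_sq_mul_log (by positivity) hT.symm, log_inv,
    log_mul two_ne_zero hσ.ne']
  ring
end

section
/- Assuming the existence of a peak-removing map f_1 on uncolored Dyck paths with at most 4 preimages per path (and at least 1), for every s ≥ 1 and m ≥ 1 there exists a map f from s-colored Dyck paths of length 2m to s-colored Dyck paths of length 2m-2 such that: (i) f(s) is obtained by removing a single colored peak; (ii) every s-colored Dyck path of length 2m-2 has at least s preimages; (iii) every s-colored Dyck path of length 2m-2 has at most 4s preimages. -/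
/-!
Forgetting colors maps an `s`-colored Dyck path `p` to an ordinary Dyck path, and a peak
`1, -1` of that shadow comes from a colored peak `ℓᵏrᵏ` of `p`, because the two steps form a
matched pair. So `f p` removes from `p` the peak at the position where `f₁` removes one from
the shadow of `p`. Conversely, each preimage of `t` under `f` is recovered from a color `k` and a
preimage `r` under `f₁` of the shadow of `t`, by inserting a `k`-colored peak into `t` at the
position of the peak `f₁` removes from `r`. Hence every fibre of `f` has exactly `s` times the
size of a fibre of `f₁`.

A word is a colored Dyck word iff a stack of open colors reads it without a color mismatch
and ends empty (`CD.iff_scan`); this makes peak removal and insertion easy to control.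
-/

/-- `DyckL l` : `l` is a (plain) Dyck path: a list of `±1` steps with nonnegative
partial sums and total sum `0`. -/
def DyckL (l : List ℤ) : Prop :=
  (∀ x ∈ l, x = 1 ∨ x = -1) ∧ (∀ k, 0 ≤ (l.take k).sum) ∧ l.sum = 0

/-- `CD s w` : `w` is an `s`-colored Dyck word over the alphabet `Fin s × Bool`
(`(k, true)` an up-step of color `k`, `(k, false)` a down-step of color `k`), where
both members of each matched up-down pair carry the same color. -/
inductive CD (s : ℕ) : List (Fin s × Bool) → Prop
  | nil : CD s []
  | pair (k : Fin s) {w₁ w₂} : CD s w₁ → CD s w₂ →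
      CD s ((k, true) :: w₁ ++ (k, false) :: w₂)


namespace CD

variable {s : ℕ}

def scan : List (Fin s × Bool) → List (Fin s) → Option (List (Fin s))
  | [], st => some st
  | (k, true) :: w, st => scan w (k :: st)
  | (_, false) :: _, [] => none
  | (k, false) :: w, c :: st => if c = k then scan w st else none

theorem scan_append (a b : List (Fin s × Bool)) (st : List (Fin s)) :
    scan (a ++ b) st = (scan a st).bind (scan b) := by
  induction a generalizing st with
  | nil => rfl
  | cons x a ih =>
    obtain ⟨k, _ | _⟩ := x
    · cases st with
      | nil => rfl
      | cons c st => by_cases hc : c = k <;> simp [scan, hc, ih]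
    · simp [scan, ih]

theorem scan_eq_self {w : List (Fin s × Bool)} (h : CD s w) (st : List (Fin s)) :
    scan w st = some st := by
  induction h generalizing st with
  | nil => rfl
  | pair k _ _ ih₁ ih₂ =>
    change scan (_ ++ _) (k :: st) = _
    simp [scan_append, ih₁, scan, ih₂]

theorem of_scan_and_exists_split (w : List (Fin s × Bool)) :
    (scan w [] = some [] → CD s w) ∧
      ∀ k st, scan w (k :: st) = some [] →
        ∃ w₁ w₂, w = w₁ ++ (k, false) :: w₂ ∧ CD s w₁ ∧ scan w₂ st = some [] := by
  induction hn : w.length using Nat.strong_induction_on generalizing w with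
  | _ n ih =>
  subst hn
  match w with
  | [] => exact ⟨fun _ => nil, fun k st h => by simp [scan] at h⟩
  | (k, false) :: w =>
    refine ⟨fun h => by simp [scan] at h, fun c st h => ?_⟩
    by_cases hc : c = k
    · subst hc
      simp only [scan] at h
      exact ⟨[], w, rfl, nil, h⟩
    · simp [scan, hc] at h
  | (k, true) :: w =>
    -- the down-step matching `(k, true)` closes a first block `(k, true) :: w₁ ++ [(k, false)]`
    have block : ∀ st, scan ((k, true) :: w) st = some [] →
        ∃ w₁ w₂, w = w₁ ++ (k, false) :: w₂ ∧ CD s w₁ ∧ scan w₂ st = some [] ∧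
          w₂.length < w.length + 1 :=
      fun st h => by
        obtain ⟨w₁, w₂, rfl, h₁, h₂⟩ := (ih _ (by simp) w rfl).2 k st h
        exact ⟨w₁, w₂, rfl, h₁, h₂, by simp; omega⟩
    refine ⟨fun h => ?_, fun c st h => ?_⟩
    · obtain ⟨w₁, w₂, rfl, h₁, h₂, hlen⟩ := block [] h
      exact pair k h₁ ((ih _ hlen w₂ rfl).1 h₂)
    · obtain ⟨w₁, w₂, rfl, h₁, h₂, hlen⟩ := block (c :: st) h
      obtain ⟨u₁, u₂, rfl, hu₁, hu₂⟩ := (ih _ hlen w₂ rfl).2 c st h₂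
      exact ⟨(k, true) :: w₁ ++ (k, false) :: u₁, u₂, by simp, pair k h₁ hu₁, hu₂⟩

theorem iff_scan (w : List (Fin s × Bool)) : CD s w ↔ scan w [] = some [] :=
  ⟨fun h => scan_eq_self h [], (of_scan_and_exists_split w).1⟩

theorem of_append_peak {w₁ w₂ : List (Fin s × Bool)} {k k' : Fin s}
    (h : CD s (w₁ ++ (k, true) :: (k', false) :: w₂)) : k = k' ∧ CD s (w₁ ++ w₂) := by
  rw [iff_scan, scan_append] at h ⊢
  cases hw : scan w₁ [] with
  | none => simp [hw] at h
  | some st =>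
    by_cases hk : k = k'
    · simpa [hw, scan, hk] using h
    · simp [hw, scan, hk] at h

theorem append_peak {w₁ w₂ : List (Fin s × Bool)} (h : CD s (w₁ ++ w₂)) (k : Fin s) :
    CD s (w₁ ++ (k, true) :: (k, false) :: w₂) := by
  rw [iff_scan, scan_append] at h ⊢
  cases hw : scan w₁ [] with
  | none => simp [hw] at h
  | some st => simpa [hw, scan] using h

end CD

def uncolor {s : ℕ} (w : List (Fin s × Bool)) : List ℤ :=
  w.map fun a => if a.2 then 1 else -1

theorem length_uncolor {s : ℕ} (w : List (Fin s × Bool)) : (uncolor w).length = w.length :=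
  List.length_map _

theorem uncolor_append {s : ℕ} (w₁ w₂ : List (Fin s × Bool)) :
    uncolor (w₁ ++ w₂) = uncolor w₁ ++ uncolor w₂ :=
  List.map_append

theorem CD.sum_uncolor_add_length {s : ℕ} {w : List (Fin s × Bool)} {st st' : List (Fin s)}
    (h : scan w st = some st') : (uncolor w).sum + st.length = st'.length := by
  induction w generalizing st with
  | nil => cases h; simp [uncolor]
  | cons x w ih =>
    obtain ⟨k, _ | _⟩ := x
    · cases st with
      | nil => simp [scan] at h
      | cons c st =>
        by_cases hc : c = k
        · simp only [scan, hc, if_pos] at h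
          have := ih h
          simp [uncolor] at this ⊢
          omega
        · simp [scan, hc] at h
    · have := ih (st := k :: st) h
      simp [uncolor] at this ⊢
      omega

theorem CD.dyckL_uncolor {s : ℕ} {w : List (Fin s × Bool)} (h : CD s w) : DyckL (uncolor w) := by
  rw [CD.iff_scan] at h
  refine ⟨fun x hx => ?_, fun n => ?_, by simpa using CD.sum_uncolor_add_length h⟩
  · obtain ⟨a, -, rfl⟩ := List.mem_map.1 hx
    cases a.2 <;> simp
  · rw [← List.take_append_drop n w, CD.scan_append] at h
    cases hn : CD.scan (w.take n) [] with
    | none => simp [hn] at h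
    | some st =>
      have := CD.sum_uncolor_add_length hn
      rw [uncolor, List.map_take] at this
      simp only [List.length_nil, Nat.cast_zero, add_zero] at this
      rw [uncolor, this]
      positivity

abbrev DyckPath (N : ℕ) : Type := {l : List ℤ // l.length = N ∧ DyckL l}

abbrev ColoredDyckPath (s N : ℕ) : Type := {w : List (Fin s × Bool) // w.length = N ∧ CD s w}

instance DyckPath.finite (N : ℕ) : Finite (DyckPath N) := by
  have hsub : {l : List ℤ | l.length = N ∧ DyckL l} ⊆
      List.map Subtype.val '' {l : List (Set.Icc (-1 : ℤ) 1) | l.length = N} := by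
    rintro l ⟨hlen, hstep, -⟩
    lift l to List (Set.Icc (-1 : ℤ) 1) using fun x hx => by
      rcases hstep x hx with rfl | rfl <;> simp
    exact ⟨l, by simpa using hlen, rfl⟩
  exact (((List.finite_length_eq _ N).image _).subset hsub).to_subtype

def ColoredDyckPath.toDyckPath {s N : ℕ} (p : ColoredDyckPath s N) : DyckPath N :=
  ⟨uncolor p.1, by rw [length_uncolor, p.2.1], p.2.2.dyckL_uncolor⟩

theorem CD.exists_peak_of_uncolor_eq {s : ℕ} {w : List (Fin s × Bool)} {l₁ l₂ : List ℤ}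
    (hw : CD s w) (h : uncolor w = l₁ ++ 1 :: -1 :: l₂) :
    ∃ w₁ w₂ k, w = w₁ ++ (k, true) :: (k, false) :: w₂ ∧ uncolor w₁ = l₁ ∧ uncolor w₂ = l₂ := by
  obtain ⟨w₁, v, rfl, h₁, hv⟩ := List.map_eq_append_iff.1 h
  obtain ⟨⟨k, b⟩, v, rfl, hb, hv⟩ := List.map_eq_cons_iff.1 hv
  obtain ⟨⟨k', b'⟩, w₂, rfl, hb', h₂⟩ := List.map_eq_cons_iff.1 hv
  obtain rfl : b = true := by cases b <;> simp_all
  obtain rfl : b' = false := by cases b' <;> simp_all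
  obtain ⟨rfl, -⟩ := hw.of_append_peak
  exact ⟨w₁, w₂, k, rfl, h₁, h₂⟩

def insertPeak {s : ℕ} (n : ℕ) (k : Fin s) (w : List (Fin s × Bool)) : List (Fin s × Bool) :=
  w.take n ++ (k, true) :: (k, false) :: w.drop n

theorem uncolor_insertPeak {s : ℕ} (n : ℕ) (k : Fin s) (w : List (Fin s × Bool)) :
    uncolor (insertPeak n k w) = (uncolor w).take n ++ 1 :: -1 :: (uncolor w).drop n := by
  simp [insertPeak, uncolor, List.map_take, List.map_drop]

theorem CD.insertPeak {s : ℕ} {w : List (Fin s × Bool)} (h : CD s w) (n : ℕ) (k : Fin s) :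
    CD s (insertPeak n k w) :=
  CD.append_peak (by rwa [List.take_append_drop]) k

theorem insertPeak_append {s : ℕ} (k : Fin s) (w₁ w₂ : List (Fin s × Bool)) :
    insertPeak w₁.length k (w₁ ++ w₂) = w₁ ++ (k, true) :: (k, false) :: w₂ := by
  simp [insertPeak]

theorem insertPeak_eq_append_peak {s n : ℕ} {k k' : Fin s} {w w₁ w₂ : List (Fin s × Bool)}
    (hn : n ≤ w.length) (hw₁ : w₁.length = n)
    (h : insertPeak n k w = w₁ ++ (k', true) :: (k', false) :: w₂) : k = k' ∧ w = w₁ ++ w₂ := by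
  obtain ⟨h₁, h₂⟩ := List.append_inj h (by simp [hw₁, hn])
  simp only [List.cons.injEq, Prod.mk.injEq, and_true] at h₂
  exact ⟨h₂.1, by rw [← List.take_append_drop n w, h₁, h₂.2.2]⟩

section PeakLift

variable {s M N : ℕ} {f₁ : DyckPath M → DyckPath N} {pre suf : DyckPath M → List ℤ}

theorem uncolor_eq_of_fiber (hf₁ : ∀ r, (f₁ r).1 = pre r ++ suf r) {t : ColoredDyckPath s N}
    {r : DyckPath M} (hr : f₁ r = t.toDyckPath) : uncolor t.1 = pre r ++ suf r := by
  rw [← hf₁, hr]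
  rfl

theorem uncolor_insertPeak_of_fiber (hsplit : ∀ r, r.1 = pre r ++ 1 :: -1 :: suf r)
    (hf₁ : ∀ r, (f₁ r).1 = pre r ++ suf r) {t : ColoredDyckPath s N} {r : DyckPath M}
    (hr : f₁ r = t.toDyckPath) (k : Fin s) :
    uncolor (insertPeak (pre r).length k t.1) = r.1 := by
  rw [uncolor_insertPeak, uncolor_eq_of_fiber hf₁ hr, List.take_left' rfl, List.drop_left' rfl,
    hsplit]

theorem card_fiber_eq_mul (hsplit : ∀ r, r.1 = pre r ++ 1 :: -1 :: suf r)
    (hf₁ : ∀ r, (f₁ r).1 = pre r ++ suf r) (f : ColoredDyckPath s M → ColoredDyckPath s N)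
    (hf : ∀ p, ∃ w₁ w₂ k, p.1 = w₁ ++ (k, true) :: (k, false) :: w₂ ∧ (f p).1 = w₁ ++ w₂ ∧
      uncolor w₁ = pre p.toDyckPath ∧ uncolor w₂ = suf p.toDyckPath)
    (t : ColoredDyckPath s N) :
    Nat.card {p // f p = t} = s * Nat.card {r // f₁ r = t.toDyckPath} := by
  have hlen : ∀ r, f₁ r = t.toDyckPath → (pre r).length ≤ t.1.length := fun r hr => by
    rw [← length_uncolor, uncolor_eq_of_fiber hf₁ hr]
    simp
  let withPeak (x : Fin s × {r // f₁ r = t.toDyckPath}) : ColoredDyckPath s M :=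
    ⟨insertPeak (pre x.2.1).length x.1 t.1,
      by rw [← length_uncolor, uncolor_insertPeak_of_fiber hsplit hf₁ x.2.2, x.2.1.2.1],
      t.2.2.insertPeak _ _⟩
  have withPeak_uncolor (x) : (withPeak x).toDyckPath = x.2.1 :=
    Subtype.ext (uncolor_insertPeak_of_fiber hsplit hf₁ x.2.2 x.1)
  have f_withPeak (x) : f (withPeak x) = t := by
    obtain ⟨w₁, w₂, k, hp, hfp, hw₁, -⟩ := hf (withPeak x)
    rw [withPeak_uncolor] at hw₁
    have := insertPeak_eq_append_peak (hlen _ x.2.2) (by rw [← length_uncolor, hw₁]) hp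
    exact Subtype.ext (hfp.trans this.2.symm)
  let G (x : Fin s × {r // f₁ r = t.toDyckPath}) : {p // f p = t} := ⟨withPeak x, f_withPeak x⟩
  have hG : Function.Bijective G := by
    constructor
    · rintro ⟨k, r⟩ ⟨k', r'⟩ h
      have hr : r = r' := Subtype.ext <| by
        simpa [G, withPeak_uncolor] using congrArg (fun q => q.1.toDyckPath) h
      subst hr
      have h' : insertPeak (pre r.1).length k t.1 = insertPeak (pre r.1).length k' t.1 :=
        congrArg (fun q => q.1.1) h
      have := insertPeak_eq_append_peak (hlen _ r.2) (by simp [hlen _ r.2]) h'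
      rw [this.1]
    · rintro ⟨p, hp⟩
      obtain ⟨w₁, w₂, k, hpw, hfp, hw₁, hw₂⟩ := hf p
      have hr : f₁ p.toDyckPath = t.toDyckPath := by
        rw [← hp]
        refine Subtype.ext ?_
        change _ = uncolor (f p).1
        rw [hf₁, ← hw₁, ← hw₂, hfp, uncolor_append]
      refine ⟨(k, ⟨p.toDyckPath, hr⟩), Subtype.ext (Subtype.ext ?_)⟩
      change insertPeak _ k t.1 = p.1
      rw [← hw₁, ← hp, hfp, length_uncolor, insertPeak_append, hpw]
  rw [← Nat.card_congr (Equiv.ofBijective G hG), Nat.card_prod, Nat.card_fin]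

end PeakLift

theorem exists_coloredDyckPath_peak_removal {s M N : ℕ} (f₁ : DyckPath M → DyckPath N)
    (hf₁ : ∀ r, ∃ l₁ l₂ : List ℤ, r.1 = l₁ ++ 1 :: (-1) :: l₂ ∧ (f₁ r).1 = l₁ ++ l₂) :
    ∃ f : ColoredDyckPath s M → ColoredDyckPath s N,
      (∀ p, ∃ (w₁ w₂ : List (Fin s × Bool)) (k : Fin s),
        p.1 = w₁ ++ (k, true) :: (k, false) :: w₂ ∧ (f p).1 = w₁ ++ w₂) ∧
      ∀ t, Nat.card {p // f p = t} = s * Nat.card {r // f₁ r = t.toDyckPath} := by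
  choose pre suf hsplit hf₁ using hf₁
  choose w₁ w₂ k hp h₁ h₂ using fun p : ColoredDyckPath s M =>
    p.2.2.exists_peak_of_uncolor_eq (hsplit p.toDyckPath)
  have huncolor (p) : uncolor (w₁ p ++ w₂ p) = (f₁ p.toDyckPath).1 := by
    rw [uncolor_append, h₁, h₂, hf₁]
  let f (p : ColoredDyckPath s M) : ColoredDyckPath s N :=
    ⟨w₁ p ++ w₂ p, by rw [← length_uncolor, huncolor, (f₁ _).2.1],
      (CD.of_append_peak (hp p ▸ p.2.2)).2⟩
  exact ⟨f, fun p => ⟨_, _, _, hp p, rfl⟩,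
    card_fiber_eq_mul hsplit hf₁ f fun p => ⟨_, _, _, hp p, rfl, h₁ p, h₂ p⟩⟩

/-- Assuming the `s = 1` peak-removal lemma (Bravyi et al.) on uncolored Dyck paths
(surjective, at most `4` preimages), for every `s ≥ 1` and `m ≥ 1` there is a map `f`
from `s`-colored Dyck paths of length `2m` to `s`-colored Dyck paths of length `2m-2`
such that (i) `f p` is obtained from `p` by removing a single colored peak `ℓᵏrᵏ`;
(ii) every `s`-colored Dyck path of length `2m-2` has at least `s` preimages;
(iii) every `s`-colored Dyck path of length `2m-2` has at most `4s` preimages. -/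
theorem colored_dyck_peak_removal_map
    (h1 : ∀ m : ℕ, 1 ≤ m →
      ∃ f : {l : List ℤ // l.length = 2 * m ∧ DyckL l} →
          {l : List ℤ // l.length = 2 * m - 2 ∧ DyckL l},
        (∀ p, ∃ l₁ l₂ : List ℤ, p.1 = l₁ ++ 1 :: (-1) :: l₂ ∧ (f p).1 = l₁ ++ l₂) ∧
        Function.Surjective f ∧
        (∀ t, Nat.card {p // f p = t} ≤ 4)) :
    ∀ s m : ℕ, 1 ≤ s → 1 ≤ m →
      ∃ f : {l : List (Fin s × Bool) // l.length = 2 * m ∧ CD s l} →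
          {l : List (Fin s × Bool) // l.length = 2 * m - 2 ∧ CD s l},
        (∀ p, ∃ (l₁ l₂ : List (Fin s × Bool)) (k : Fin s),
          p.1 = l₁ ++ (k, true) :: (k, false) :: l₂ ∧ (f p).1 = l₁ ++ l₂) ∧
        (∀ t, s ≤ Nat.card {p // f p = t}) ∧
        (∀ t, Nat.card {p // f p = t} ≤ 4 * s) := by
  intro s m _ hm
  obtain ⟨f₁, hpeak, hsurj, hcard⟩ := h1 m hm
  obtain ⟨f, hf, hfiber⟩ := exists_coloredDyckPath_peak_removal (s := s) f₁ hpeak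
  refine ⟨f, hf, fun t => ?_, fun t => ?_⟩
  · obtain ⟨r, hr⟩ := hsurj (ColoredDyckPath.toDyckPath t)
    rw [hfiber]
    exact Nat.le_mul_of_pos_right s (Nat.card_pos_iff.2 ⟨⟨⟨r, hr⟩⟩, inferInstance⟩)
  · rw [hfiber, mul_comm]
    exact Nat.mul_le_mul_right s (hcard _)
end

section
/- Let P be a finite stochastic matrix that is reversible with respect to a probability distribution π (π(a)P(a,b) = π(b)P(b,a) for all a,b) and irreducible. If for each ordered pair (s,t) of states a path γ(s,t) of edges with positive transition probability is chosen, then the second-largest eigenvalue λ₂ of P satisfies 1 - λ₂ ≥ 1/(ρL), where L is the maximum path length and ρ = max over edges (a,b) of (1/(π(a)P(a,b))) * sum over pairs (s,t) whose path uses (a,b) of π(s)π(t). -/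
/-!
For an eigenvector `v` with eigenvalue `λ ≠ 1`, stationarity of `π` makes `v` orthogonal to the
constants in `ℓ²(π)`, so `∑ π s π t (v s - v t)² = 2 Var v` while the Dirichlet form
`∑ π a P a b (v a - v b)²` equals `2 (1 - λ) Var v`. Telescoping `v s - v t` along a loop-free
version of `γ s t` and applying Cauchy–Schwarz bounds `(v s - v t)²` by `L` times the sum of the
squared increments over the edges of `γ s t`; exchanging the order of summation, each edge
`(a, b)` is charged its load, which is at most `ρ π a P a b`. Hence `Var v ≤ ρ L (1 - λ) Var v`.
-/

/-- `IsEdgePath P s t es` : `es` is a list of consecutive edges leading from `s` to `t`,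
each edge having positive transition probability under `P`. -/
def IsEdgePath {V : Type*} (P : Matrix V V ℝ) : V → V → List (V × V) → Prop
  | s, t, [] => s = t
  | s, t, e :: rest => e.1 = s ∧ 0 < P e.1 e.2 ∧ IsEdgePath P e.2 t rest

open Finset

namespace IsEdgePath

variable {V : Type*} {P : Matrix V V ℝ}

theorem append_iff {t : V} {l₁ l₂ : List (V × V)} : ∀ {s : V},
    IsEdgePath P s t (l₁ ++ l₂) ↔ ∃ m, IsEdgePath P s m l₁ ∧ IsEdgePath P m t l₂ := by
  induction l₁ with
  | nil => simp [IsEdgePath]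
  | cons e l ih => simp [IsEdgePath, ih, and_assoc]

theorem pos_of_mem : ∀ {es : List (V × V)} {s t : V}, IsEdgePath P s t es →
    ∀ e ∈ es, 0 < P e.1 e.2
  | _ :: _, _, _, ⟨_, hpos, _⟩, _, .head _ => hpos
  | _ :: _, _, _, ⟨_, _, h⟩, e, .tail _ he => pos_of_mem h e he

theorem sub_eq_sum (f : V → ℝ) : ∀ {es : List (V × V)} {s t : V}, IsEdgePath P s t es →
    f s - f t = (es.map fun e => f e.1 - f e.2).sum
  | [], _, _, rfl => by simp
  | _ :: _, _, _, ⟨rfl, _, h⟩ => by simp [← sub_eq_sum f h]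

theorem pos_of_pos {π : V → ℝ} (hπnn : ∀ a, 0 ≤ π a)
    (hrev : ∀ a b, π a * P a b = π b * P b a) : ∀ {es : List (V × V)} {s t : V},
    IsEdgePath P s t es → 0 < π s → 0 < π t
  | [], _, _, rfl, hs => hs
  | e :: _, _, _, ⟨rfl, hP, h⟩, hs => by
    have hflow : 0 < π e.2 * P e.2 e.1 := hrev e.1 e.2 ▸ mul_pos hs hP
    exact pos_of_pos hπnn hrev h ((hπnn _).lt_of_ne' (left_ne_zero_of_mul hflow.ne'))

theorem exists_nodup_subset [DecidableEq V] : ∀ {es : List (V × V)} {s t : V},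
    IsEdgePath P s t es →
      ∃ es', IsEdgePath P s t es' ∧ es'.Nodup ∧ es'.length ≤ es.length ∧ es' ⊆ es
  | [], _, _, h => ⟨[], h, .nil, le_rfl, List.nil_subset _⟩
  | e :: rest, _, _, ⟨he, hP, h⟩ => by
    by_cases hmem : e ∈ rest
    · -- cut out the loop between the two occurrences of `e`
      obtain ⟨l₂, l₃, rfl⟩ := List.append_of_mem hmem
      obtain ⟨-, -, -, -, h₃⟩ := append_iff.1 h
      obtain ⟨es', h', hnd, hlen, hsub⟩ := exists_nodup_subset (es := e :: l₃) ⟨he, hP, h₃⟩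
      refine ⟨es', h', hnd, hlen.trans (by simp; omega), List.Subset.trans hsub ?_⟩
      exact List.cons_subset_cons _
        (List.subset_append_of_subset_right _ (List.subset_cons_self _ _))
    · obtain ⟨es', h', hnd, hlen, hsub⟩ := exists_nodup_subset h
      exact ⟨e :: es', ⟨he, hP, h'⟩, .cons (fun hx => hmem (hsub hx)) hnd,
        Nat.succ_le_succ hlen, List.cons_subset_cons _ hsub⟩
termination_by es => es.length

theorem sq_sub_le_length_mul_sum [DecidableEq V] {es : List (V × V)} {s t : V}
    (h : IsEdgePath P s t es) (f : V → ℝ) :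
    (f s - f t) ^ 2 ≤ es.length * ∑ e ∈ es.toFinset, (f e.1 - f e.2) ^ 2 := by
  obtain ⟨es', h', hnd, hlen, hsub⟩ := h.exists_nodup_subset
  calc (f s - f t) ^ 2 = (∑ e ∈ es'.toFinset, (f e.1 - f e.2)) ^ 2 := by
        rw [h'.sub_eq_sum f, List.sum_toFinset _ hnd]
    _ ≤ #es'.toFinset * ∑ e ∈ es'.toFinset, (f e.1 - f e.2) ^ 2 := sq_sum_le_card_mul_sum_sq
    _ ≤ es.length * ∑ e ∈ es.toFinset, (f e.1 - f e.2) ^ 2 := by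
        have hsub' : es'.toFinset ⊆ es.toFinset := fun _ hx =>
          List.mem_toFinset.2 (hsub (List.mem_toFinset.1 hx))
        exact mul_le_mul (by exact_mod_cast (List.toFinset_card_le _).trans hlen)
          (sum_le_sum_of_subset_of_nonneg hsub' fun _ _ _ => sq_nonneg _)
          (sum_nonneg fun _ _ => sq_nonneg _) (Nat.cast_nonneg _)

end IsEdgePath

section Reversible

variable {V : Type*} [Fintype V] {P : Matrix V V ℝ} {π : V → ℝ}

theorem sum_mul_apply_eq_of_reversible (hProw : ∀ a, ∑ b, P a b = 1)
    (hrev : ∀ a b, π a * P a b = π b * P b a) (b : V) : ∑ a, π a * P a b = π b := by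
  simp_rw [hrev _ b, ← mul_sum, hProw, mul_one]

theorem sum_mul_eq_zero_of_mulVec_eq_smul (hstat : ∀ b, ∑ a, π a * P a b = π b) {lam : ℝ}
    {v : V → ℝ} (heig : P.mulVec v = lam • v) (hlam : lam ≠ 1) : ∑ a, π a * v a = 0 := by
  have hfix : ∑ a, π a * (P.mulVec v) a = ∑ a, π a * v a := by
    simp_rw [Matrix.mulVec, dotProduct, mul_sum, ← mul_assoc]
    rw [sum_comm]
    simp_rw [← sum_mul, hstat]
  rw [heig] at hfix
  simp only [Pi.smul_apply, smul_eq_mul, mul_left_comm _ lam, ← mul_sum] at hfix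
  by_contra hne
  exact hlam ((mul_eq_right₀ hne).1 hfix)

theorem sum_sum_mul_sub_sq_eq (hProw : ∀ a, ∑ b, P a b = 1)
    (hstat : ∀ b, ∑ a, π a * P a b = π b) (f : V → ℝ) :
    ∑ a, ∑ b, π a * P a b * (f a - f b) ^ 2 =
      2 * (∑ a, π a * f a ^ 2 - ∑ a, π a * f a * P.mulVec f a) := by
  have hrow : ∀ a, ∑ b, π a * P a b * (f a - f b) ^ 2 =
      π a * f a ^ 2 * ∑ b, P a b - 2 * (π a * f a * P.mulVec f a) +
        ∑ b, π a * P a b * f b ^ 2 := by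
    intro a
    simp only [Matrix.mulVec, dotProduct, mul_sum, ← sum_sub_distrib, ← sum_add_distrib]
    exact sum_congr rfl fun b _ => by ring
  simp_rw [hrow, hProw, sum_add_distrib, sum_sub_distrib]
  rw [sum_comm (f := fun a b => π a * P a b * f b ^ 2)]
  simp_rw [← sum_mul, hstat, ← mul_sum]
  ring

theorem sum_sum_mul_mul_sub_sq_eq (hπsum : ∑ a, π a = 1) (f : V → ℝ) :
    ∑ s, ∑ t, π s * π t * (f s - f t) ^ 2 =
      2 * (∑ a, π a * f a ^ 2 - (∑ a, π a * f a) ^ 2) := by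
  have hrow : ∀ s, ∑ t, π s * π t * (f s - f t) ^ 2 =
      π s * f s ^ 2 * ∑ t, π t - 2 * (π s * f s) * ∑ t, π t * f t +
        π s * ∑ t, π t * f t ^ 2 := by
    intro s
    simp only [mul_sum, ← sum_sub_distrib, ← sum_add_distrib]
    exact sum_congr rfl fun t _ => by ring
  simp_rw [hrow, hπsum, sum_add_distrib, sum_sub_distrib, ← sum_mul, ← mul_sum, hπsum]
  ring

end Reversible

section CanonicalPaths

variable {V : Type*} [Fintype V] [DecidableEq V] {P : Matrix V V ℝ} {π : V → ℝ}
  {γ : V → V → List (V × V)} {ρ : ℝ}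

theorem edge_load_le_mul (hPnn : ∀ a b, 0 ≤ P a b) (hπpos : ∀ a, 0 < π a)
    (hγ : ∀ s t, IsEdgePath P s t (γ s t))
    (hρ : ∀ a b, 0 < P a b →
      (∑ p ∈ univ.filter (fun p : V × V => (a, b) ∈ γ p.1 p.2), π p.1 * π p.2) /
          (π a * P a b) ≤ ρ) (a b : V) :
    ∑ p ∈ univ.filter (fun p : V × V => (a, b) ∈ γ p.1 p.2), π p.1 * π p.2 ≤
      ρ * (π a * P a b) := by
  rcases (hPnn a b).eq_or_lt with hzero | hpos
  · have hempty : univ.filter (fun p : V × V => (a, b) ∈ γ p.1 p.2) = ∅ :=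
      filter_false_of_mem fun p _ hp => ((hγ p.1 p.2).pos_of_mem _ hp).ne hzero
    simp [hempty, ← hzero]
  · exact (div_le_iff₀ (mul_pos (hπpos a) hpos)).1 (hρ a b hpos)

theorem canonical_path_poincare (hPnn : ∀ a b, 0 ≤ P a b) (hπpos : ∀ a, 0 < π a)
    (hγ : ∀ s t, IsEdgePath P s t (γ s t)) {L : ℕ} (hL : ∀ s t, (γ s t).length ≤ L)
    (hρ : ∀ a b, 0 < P a b →
      (∑ p ∈ univ.filter (fun p : V × V => (a, b) ∈ γ p.1 p.2), π p.1 * π p.2) /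
          (π a * P a b) ≤ ρ) (f : V → ℝ) :
    ∑ s, ∑ t, π s * π t * (f s - f t) ^ 2 ≤
      L * ρ * ∑ a, ∑ b, π a * P a b * (f a - f b) ^ 2 := by
  set F : V × V → ℝ := fun e => (f e.1 - f e.2) ^ 2
  calc ∑ s, ∑ t, π s * π t * (f s - f t) ^ 2
      ≤ ∑ s, ∑ t, π s * π t * (L * ∑ e ∈ (γ s t).toFinset, F e) := by
        gcongr with s _ t _
        · exact mul_nonneg (hπpos s).le (hπpos t).le
        · exact ((hγ s t).sq_sub_le_length_mul_sum f).trans <| mul_le_mul_of_nonneg_right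
            (by exact_mod_cast hL s t) (sum_nonneg fun _ _ => sq_nonneg _)
    _ = L * ∑ p : V × V, ∑ e ∈ (γ p.1 p.2).toFinset, π p.1 * π p.2 * F e := by
        simp_rw [Fintype.sum_prod_type, mul_sum]
        exact sum_congr rfl fun _ _ => sum_congr rfl fun _ _ => sum_congr rfl fun _ _ => by ring
    _ = L * ∑ e : V × V, ∑ p ∈ univ.filter (fun p : V × V => e ∈ γ p.1 p.2),
          π p.1 * π p.2 * F e := by
        rw [sum_comm' (t' := univ) (s' := fun e => univ.filter (fun p : V × V => e ∈ γ p.1 p.2))]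
        simp
    _ ≤ L * ∑ e : V × V, ρ * (π e.1 * P e.1 e.2) * F e := by
        gcongr with e
        rw [← sum_mul]
        exact mul_le_mul_of_nonneg_right (edge_load_le_mul hPnn hπpos hγ hρ e.1 e.2)
          (sq_nonneg _)
    _ = L * ρ * ∑ a, ∑ b, π a * P a b * (f a - f b) ^ 2 := by
        simp_rw [Fintype.sum_prod_type, mul_assoc, mul_sum]
        rfl

end CanonicalPaths

theorem canonical_path_spectral_gap_bound_general
    {V : Type*} [Fintype V] [DecidableEq V]
    (P : Matrix V V ℝ) (π : V → ℝ)
    (hPnn : ∀ a b, 0 ≤ P a b) (hProw : ∀ a, ∑ b, P a b = 1)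
    (hπnn : ∀ a, 0 ≤ π a) (hπsum : ∑ a, π a = 1)
    (hrev : ∀ a b, π a * P a b = π b * P b a)
    (γ : V → V → List (V × V))
    (hγ : ∀ s t, IsEdgePath P s t (γ s t))
    (L : ℕ) (hL : ∀ s t, (γ s t).length ≤ L)
    (ρ : ℝ)
    (hρ : ∀ a b, 0 < P a b →
      (∑ p ∈ Finset.univ.filter (fun p : V × V => (a, b) ∈ γ p.1 p.2), π p.1 * π p.2) /
          (π a * P a b) ≤ ρ)
    (lam : ℝ) (v : V → ℝ) (hv : v ≠ 0)
    (heig : P.mulVec v = lam • v) (hlam : lam ≠ 1) :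
    1 - lam ≥ 1 / (ρ * L) := by
  obtain ⟨a₀, -, hπa₀⟩ := exists_lt_of_sum_lt (s := univ) (f := 0) (g := π) (by simp [hπsum])
  have hπpos : ∀ a, 0 < π a := fun a => (hγ a₀ a).pos_of_pos hπnn hrev hπa₀
  obtain ⟨b₀, -, hPb₀⟩ := exists_lt_of_sum_lt (s := univ) (f := 0) (g := P a₀) (by simp [hProw])
  have hρ0 : 0 ≤ ρ := (div_nonneg (sum_nonneg fun p _ => mul_nonneg (hπnn p.1) (hπnn p.2))
    (mul_pos hπa₀ hPb₀).le).trans (hρ a₀ b₀ hPb₀)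
  have hstat := sum_mul_apply_eq_of_reversible hProw hrev
  have hmean := sum_mul_eq_zero_of_mulVec_eq_smul hstat heig hlam
  obtain ⟨x₀, hx₀ : v x₀ ≠ 0⟩ := Function.ne_iff.1 hv
  have hvar : 0 < ∑ a, π a * v a ^ 2 := sum_pos' (fun a _ => by have := hπnn a; positivity)
    ⟨x₀, mem_univ _, by have := hπpos x₀; positivity⟩
  have hpoincare := canonical_path_poincare hPnn hπpos hγ hL hρ v
  rw [sum_sum_mul_mul_sub_sq_eq hπsum, hmean,
    sum_sum_mul_sub_sq_eq hProw hstat, heig] at hpoincare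
  have hcross : ∑ a, π a * v a * (lam • v) a = lam * ∑ a, π a * v a ^ 2 := by
    rw [mul_sum]
    exact sum_congr rfl fun a _ => by simp only [Pi.smul_apply, smul_eq_mul]; ring
  rw [hcross] at hpoincare
  have hgap : 1 ≤ ρ * L * (1 - lam) := by nlinarith
  have hρL : 0 < ρ * L := (mul_nonneg hρ0 L.cast_nonneg).lt_of_ne' fun h => by
    rw [h, zero_mul] at hgap; linarith
  rw [ge_iff_le, div_le_iff₀ hρL]
  linarith

/-- Canonical path (Sinclair) bound: let `P` be a finite stochastic matrix, reversible
with respect to a probability distribution `π` and irreducible.  If for each ordered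
pair `(s,t)` a canonical path `γ s t` of edges with positive transition probability is
chosen, all of length at most `L`, and every edge `(a,b)` has load
`(1/(π a * P a b)) * ∑_{(s,t) : (a,b) ∈ γ s t} π s * π t` at most `ρ`, then every
eigenvalue `lam ≠ 1` of `P` (in particular the second largest, `λ₂`) satisfies
`1 - lam ≥ 1/(ρ L)`. -/
theorem canonical_path_spectral_gap_bound
    {V : Type*} [Fintype V] [DecidableEq V] [Nonempty V]
    (P : Matrix V V ℝ) (π : V → ℝ)
    (hPnn : ∀ a b, 0 ≤ P a b) (hProw : ∀ a, ∑ b, P a b = 1)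
    (hπnn : ∀ a, 0 ≤ π a) (hπsum : ∑ a, π a = 1)
    (hrev : ∀ a b, π a * P a b = π b * P b a)
    (hirr : ∀ a b, ∃ k : ℕ, 0 < (P ^ k) a b)
    (γ : V → V → List (V × V))
    (hγ : ∀ s t, IsEdgePath P s t (γ s t))
    (L : ℕ) (hL : ∀ s t, (γ s t).length ≤ L)
    (ρ : ℝ)
    (hρ : ∀ a b, 0 < P a b →
      (∑ p ∈ Finset.univ.filter (fun p : V × V => (a, b) ∈ γ p.1 p.2), π p.1 * π p.2) /
          (π a * P a b) ≤ ρ)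
    (lam : ℝ) (v : V → ℝ) (hv : v ≠ 0)
    (heig : P.mulVec v = lam • v) (hlam : lam ≠ 1) :
    1 - lam ≥ 1 / (ρ * L) :=
  canonical_path_spectral_gap_bound_general P π hPnn hProw hπnn hπsum hrev γ hγ L hL ρ hρ lam v hv
    heig hlam
end
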